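/- With R(s,t) = 4∫_0^π Λ(θ)[(s+ε)^{2H(θ)} + (t+ε)^{2H(θ)} − |s−t|^{2H(θ)}] dθ, Λ ≥ 0 integrable, and H : [0,π] → [H_min, H_max] ⊂ (0,1) measurable with H_bar = ess inf H and Leb({θ : H(θ) = H_bar}) > 0, one has lim_{h→0^+} h^{−2H_bar} (δ_1^h ∘ δ_2^h R)(t,t) = (4 − 2^{2H_bar}) J, where J = 8∫_0^π Λ(θ) 1_{{H(θ)=H_bar}} dθ, uniformly in t ∈ [h, 1−h]. -/
import Mathlib


open MeasureTheory intervalIntegral Real Filter Topology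

/-- Second-order difference operator in the first variable. -/
noncomputable def delta1 (f : ℝ → ℝ → ℝ) (h s t : ℝ) : ℝ :=
  f (s + h) t + f (s - h) t - 2 * f s t

/-- Second-order difference operator in the second variable. -/
noncomputable def delta2 (f : ℝ → ℝ → ℝ) (h s t : ℝ) : ℝ :=
  f s (t + h) + f s (t - h) - 2 * f s t

/-- Measurability of a fixed positive base to a measurable exponent. -/
lemma meas_rpow_pos_base {x : ℝ} (hx : 0 < x) {g : ℝ → ℝ} (hg : Measurable g) :
    Measurable fun θ => x ^ g θ := by
  have : (fun θ => x ^ g θ) = fun θ => Real.exp (Real.log x * g θ) :=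
    funext fun θ => Real.rpow_def_of_pos hx _
  rw [this]
  exact (hg.const_mul (Real.log x)).exp

lemma aux_rpow_le (x p : ℝ) (hx : 0 ≤ x) (hp0 : 0 ≤ p) (hp2 : p ≤ 2) :
    x ^ p ≤ 1 + x ^ 2 := by
  rcases le_total x 1 with h1 | h1
  · have := Real.rpow_le_one hx h1 hp0
    nlinarith [sq_nonneg x]
  · have h2 : x ^ p ≤ x ^ (2 : ℝ) := Real.rpow_le_rpow_of_exponent_le h1 hp2
    have h3 : x ^ (2 : ℝ) = x * x := by
      rw [show (2 : ℝ) = ((2 : ℕ) : ℝ) by norm_num, Real.rpow_natCast]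
      ring
    rw [h3] at h2
    nlinarith [sq_nonneg x]

lemma integ_aux (Hmin Hmax : ℝ) (hmin : 0 < Hmin) (hmax : Hmax < 1)
    (H Λ : ℝ → ℝ) (hHmeas : Measurable H)
    (hHrange : ∀ θ, H θ ∈ Set.Icc Hmin Hmax)
    (hΛmeas : Measurable Λ) (hΛnonneg : ∀ θ, 0 ≤ Λ θ)
    (hΛint : IntegrableOn Λ (Set.Ioc 0 π)) (x : ℝ) (hx : 0 ≤ x) :
    IntegrableOn (fun θ => Λ θ * x ^ (2 * H θ)) (Set.Ioc 0 π) := by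
  rcases hx.eq_or_lt with h | h
  · have : (fun θ => Λ θ * x ^ (2 * H θ)) = fun _ => (0 : ℝ) := by
      funext θ
      have h2 : 2 * H θ ≠ 0 := by
        have h0 : 0 < H θ := lt_of_lt_of_le hmin (hHrange θ).1
        positivity
      rw [← h, Real.zero_rpow h2, mul_zero]
    rw [this]
    exact integrableOn_zero
  · apply Integrable.mono' (hΛint.const_mul (1 + x ^ 2))
    · exact (hΛmeas.mul (meas_rpow_pos_base h (hHmeas.const_mul 2))).aestronglyMeasurable
    · refine ae_of_all _ fun θ => ?_
      have h1 : 0 ≤ x ^ (2 * H θ) := Real.rpow_nonneg hx _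
      have h2 : x ^ (2 * H θ) ≤ 1 + x ^ 2 := by
        apply aux_rpow_le x _ hx
        · have h0 : 0 < H θ := lt_of_lt_of_le hmin (hHrange θ).1
          positivity
        · have := (hHrange θ).2; linarith
      have h3 : 0 ≤ Λ θ := hΛnonneg θ
      rw [Real.norm_eq_abs, abs_of_nonneg (mul_nonneg h3 h1)]
      nlinarith

theorem afbm_lass_limit (Hmin Hmax : ℝ) (hmin : 0 < Hmin) (hmax : Hmax < 1)
    (H Λ : ℝ → ℝ) (hHmeas : Measurable H)
    (hHrange : ∀ θ, H θ ∈ Set.Icc Hmin Hmax)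
    (hΛmeas : Measurable Λ) (hΛnonneg : ∀ θ, 0 ≤ Λ θ)
    (hΛint : IntegrableOn Λ (Set.Ioc 0 π))
    (ε : ℝ) (hε : 0 ≤ ε) (Hbar : ℝ)
    (hHbar : Hbar = essInf H (volume.restrict (Set.Ioc 0 π)))
    (hpos : 0 < volume {θ ∈ Set.Ioc (0 : ℝ) π | H θ = Hbar}) :
    ∀ δ > (0 : ℝ), ∃ h₀ > (0 : ℝ), ∀ h : ℝ, 0 < h → h < h₀ →
      ∀ t : ℝ, h ≤ t → t ≤ 1 - h →
      |h ^ (-(2 * Hbar)) * delta1 (fun s t' => delta2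
            (fun s t => 4 * ∫ θ in (0 : ℝ)..π,
              Λ θ * ((s + ε) ^ (2 * H θ) + (t + ε) ^ (2 * H θ)
                - |s - t| ^ (2 * H θ))) h s t') h t t
        - (4 - 2 ^ (2 * Hbar))
            * (8 * ∫ θ in (0 : ℝ)..π, if H θ = Hbar then Λ θ else 0)| < δ := by
  have hπ : (0 : ℝ) ≤ π := Real.pi_pos.le
  -- interval integrability of the basic pieces
  have hint : ∀ x : ℝ, 0 ≤ x →
      IntervalIntegrable (fun θ => Λ θ * x ^ (2 * H θ)) volume 0 π := fun x hx =>
    (intervalIntegrable_iff_integrableOn_Ioc_of_le hπ).mpr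
      (integ_aux Hmin Hmax hmin hmax H Λ hHmeas hHrange hΛmeas hΛnonneg hΛint x hx)
  -- splitting the integral of a sum
  have split : ∀ a b c : ℝ, 0 ≤ a → 0 ≤ b → 0 ≤ c →
      (∫ θ in (0 : ℝ)..π,
          Λ θ * (a ^ (2 * H θ) + b ^ (2 * H θ) - c ^ (2 * H θ)))
        = (∫ θ in (0 : ℝ)..π, Λ θ * a ^ (2 * H θ))
          + (∫ θ in (0 : ℝ)..π, Λ θ * b ^ (2 * H θ))
          - ∫ θ in (0 : ℝ)..π, Λ θ * c ^ (2 * H θ) := by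
    intro a b c ha hb hc
    rw [← intervalIntegral.integral_add (hint a ha) (hint b hb),
      ← intervalIntegral.integral_sub ((hint a ha).add (hint b hb)) (hint c hc)]
    apply intervalIntegral.integral_congr
    intro θ _
    ring
  have F0 : (∫ θ in (0 : ℝ)..π, Λ θ * (0 : ℝ) ^ (2 * H θ)) = 0 := by
    rw [show (fun θ => Λ θ * (0 : ℝ) ^ (2 * H θ)) = fun _ => (0 : ℝ) from funext fun θ => by
      have h2 : 2 * H θ ≠ 0 := by
        have h0 : 0 < H θ := lt_of_lt_of_le hmin (hHrange θ).1
        positivity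
      rw [Real.zero_rpow h2, mul_zero]]
    simp
  -- the key algebraic identity
  have main : ∀ h : ℝ, 0 < h → ∀ t : ℝ, h ≤ t →
      h ^ (-(2 * Hbar)) * delta1 (fun s t' => delta2
            (fun s t => 4 * ∫ θ in (0 : ℝ)..π,
              Λ θ * ((s + ε) ^ (2 * H θ) + (t + ε) ^ (2 * H θ)
                - |s - t| ^ (2 * H θ))) h s t') h t t
        = ∫ θ in (0 : ℝ)..π,
            Λ θ * (32 - 8 * 2 ^ (2 * H θ)) * h ^ (2 * H θ - 2 * Hbar) := by
    intro h hh t ht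
    have h2h : (0 : ℝ) < 2 * h := by linarith
    have hA : (0 : ℝ) ≤ t + h + ε := by linarith
    have hB : (0 : ℝ) ≤ t - h + ε := by linarith
    have hC : (0 : ℝ) ≤ t + ε := by linarith
    have key : delta1 (fun s t' => delta2
            (fun s t => 4 * ∫ θ in (0 : ℝ)..π,
              Λ θ * ((s + ε) ^ (2 * H θ) + (t + ε) ^ (2 * H θ)
                - |s - t| ^ (2 * H θ))) h s t') h t t
        = 32 * (∫ θ in (0 : ℝ)..π, Λ θ * h ^ (2 * H θ))
          - 8 * ∫ θ in (0 : ℝ)..π, Λ θ * (2 * h) ^ (2 * H θ) := by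
      simp only [delta1, delta2]
      simp only [show t + h - (t + h) = 0 from by ring,
        show t + h - (t - h) = 2 * h from by ring,
        show t + h - t = h from by ring,
        show t - h - (t + h) = -(2 * h) from by ring,
        show t - h - (t - h) = 0 from by ring,
        show t - h - t = -h from by ring,
        show t - (t + h) = -h from by ring,
        show t - (t - h) = h from by ring,
        show t - t = 0 from sub_self t,
        abs_neg, abs_zero, abs_of_pos hh, abs_of_pos h2h]
      rw [split (t + h + ε) (t + h + ε) 0 hA hA le_rfl,
        split (t + h + ε) (t - h + ε) (2 * h) hA hB h2h.le,
        split (t + h + ε) (t + ε) h hA hC hh.le,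
        split (t - h + ε) (t + h + ε) (2 * h) hB hA h2h.le,
        split (t - h + ε) (t - h + ε) 0 hB hB le_rfl,
        split (t - h + ε) (t + ε) h hB hC hh.le,
        split (t + ε) (t + h + ε) h hC hA hh.le,
        split (t + ε) (t - h + ε) h hC hB hh.le,
        split (t + ε) (t + ε) 0 hC hC le_rfl]
      simp only [F0]
      ring
    rw [key]
    have i1 := (hint h hh.le).const_mul (32 : ℝ)
    have i2 := (hint (2 * h) h2h.le).const_mul (8 : ℝ)
    rw [← intervalIntegral.integral_const_mul (32 : ℝ) (fun θ => Λ θ * h ^ (2 * H θ)),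
      ← intervalIntegral.integral_const_mul (8 : ℝ) (fun θ => Λ θ * (2 * h) ^ (2 * H θ)),
      ← intervalIntegral.integral_sub i1 i2,
      ← intervalIntegral.integral_const_mul]
    apply intervalIntegral.integral_congr
    intro θ _
    have e1 : (2 * h) ^ (2 * H θ) = 2 ^ (2 * H θ) * h ^ (2 * H θ) :=
      Real.mul_rpow (by norm_num) hh.le
    have e2 : h ^ (2 * H θ - 2 * Hbar) = h ^ (-(2 * Hbar)) * h ^ (2 * H θ) := by
      rw [← Real.rpow_add hh]
      congr 1
      ring
    simp only [e1, e2]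
    ring
  -- a.e. lower bound by the essential infimum
  have hbdd : IsBoundedUnder (· ≥ ·) (ae (volume.restrict (Set.Ioc (0 : ℝ) π))) H :=
    isBoundedUnder_of ⟨Hmin, fun θ => (hHrange θ).1⟩
  have hae0 : ∀ᵐ θ ∂(volume.restrict (Set.Ioc (0 : ℝ) π)), Hbar ≤ H θ := by
    rw [hHbar]
    exact ae_essInf_le hbdd
  have hae : ∀ᵐ θ ∂(volume : Measure ℝ), θ ∈ Set.uIoc (0 : ℝ) π → Hbar ≤ H θ := by
    rw [Set.uIoc_of_le hπ]
    exact (ae_restrict_iff' measurableSet_Ioc).mp hae0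
  have h24 : (2 : ℝ) ^ (2 : ℝ) = 4 := by
    rw [show (2 : ℝ) = ((2 : ℕ) : ℝ) by norm_num, Real.rpow_natCast]
    norm_num
  have hIoo : ∀ᶠ h in nhdsWithin (0 : ℝ) (Set.Ioi 0), h ∈ Set.Ioo (0 : ℝ) 1 :=
    Ioo_mem_nhdsGT_of_mem ⟨le_refl 0, one_pos⟩
  -- dominated convergence
  have hDCT : Tendsto
      (fun h : ℝ => ∫ θ in (0 : ℝ)..π,
        Λ θ * (32 - 8 * 2 ^ (2 * H θ)) * h ^ (2 * H θ - 2 * Hbar))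
      (nhdsWithin (0 : ℝ) (Set.Ioi 0))
      (𝓝 (∫ θ in (0 : ℝ)..π,
        if H θ = Hbar then Λ θ * (32 - 8 * 2 ^ (2 * Hbar)) else 0)) := by
    apply intervalIntegral.tendsto_integral_filter_of_dominated_convergence
      (fun θ => 32 * Λ θ)
    · filter_upwards [hIoo] with h hh
      exact ((hΛmeas.mul (measurable_const.sub
          ((meas_rpow_pos_base two_pos (hHmeas.const_mul 2)).const_mul 8))).mul
        (meas_rpow_pos_base hh.1 ((hHmeas.const_mul 2).sub measurable_const))).aestronglyMeasurable
    · filter_upwards [hIoo] with h hh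
      filter_upwards [hae] with θ hθimp hmem
      have hθ : Hbar ≤ H θ := hθimp hmem
      have hp2 : 2 * H θ ≤ 2 := by have := (hHrange θ).2; linarith
      have h2p4 : (2 : ℝ) ^ (2 * H θ) ≤ 4 := by
        calc (2 : ℝ) ^ (2 * H θ) ≤ 2 ^ (2 : ℝ) :=
              Real.rpow_le_rpow_of_exponent_le one_le_two hp2
          _ = 4 := h24
      have h2p0 : (0 : ℝ) ≤ 2 ^ (2 * H θ) := Real.rpow_nonneg (by norm_num) _
      have he0 : 0 ≤ 2 * H θ - 2 * Hbar := by linarith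
      have hhe1 : h ^ (2 * H θ - 2 * Hbar) ≤ 1 :=
        Real.rpow_le_one hh.1.le hh.2.le he0
      have hhe0 : 0 ≤ h ^ (2 * H θ - 2 * Hbar) := Real.rpow_nonneg hh.1.le _
      have hΛ := hΛnonneg θ
      rw [Real.norm_eq_abs, abs_of_nonneg
        (mul_nonneg (mul_nonneg hΛ (by linarith)) hhe0)]
      nlinarith [mul_nonneg hΛ hhe0, mul_nonneg hΛ (mul_nonneg h2p0 hhe0)]
    · exact (intervalIntegrable_iff_integrableOn_Ioc_of_le hπ).mpr (hΛint.const_mul 32)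
    · filter_upwards [hae] with θ hθimp hmem
      have hθ : Hbar ≤ H θ := hθimp hmem
      by_cases hc : H θ = Hbar
      · have heq : (fun h : ℝ => Λ θ * (32 - 8 * 2 ^ (2 * H θ)) * h ^ (2 * H θ - 2 * Hbar))
            = fun _ => Λ θ * (32 - 8 * 2 ^ (2 * Hbar)) := by
          funext h
          rw [hc, sub_self, Real.rpow_zero, mul_one]
        rw [heq, if_pos hc]
        exact tendsto_const_nhds
      · have hlt : Hbar < H θ := lt_of_le_of_ne hθ (Ne.symm hc)
        have he : 0 < 2 * H θ - 2 * Hbar := by linarith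
        have h0 : Tendsto (fun x : ℝ => x ^ (2 * H θ - 2 * Hbar))
            (nhdsWithin (0 : ℝ) (Set.Ioi 0)) (𝓝 0) := by
          have hcont := (Real.continuousAt_rpow_const 0 (2 * H θ - 2 * Hbar)
            (Or.inr he.le)).tendsto
          rw [Real.zero_rpow (ne_of_gt he)] at hcont
          exact hcont.mono_left nhdsWithin_le_nhds
        have := h0.const_mul (Λ θ * (32 - 8 * 2 ^ (2 * H θ)))
        rw [mul_zero] at this
        rw [if_neg hc]
        exact this
  -- identify the limit with the target value
  have hT : (∫ θ in (0 : ℝ)..π,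
        if H θ = Hbar then Λ θ * (32 - 8 * 2 ^ (2 * Hbar)) else 0)
      = (4 - 2 ^ (2 * Hbar))
          * (8 * ∫ θ in (0 : ℝ)..π, if H θ = Hbar then Λ θ else 0) := by
    have : (∫ θ in (0 : ℝ)..π,
          if H θ = Hbar then Λ θ * (32 - 8 * 2 ^ (2 * Hbar)) else 0)
        = ∫ θ in (0 : ℝ)..π,
            (32 - 8 * 2 ^ (2 * Hbar)) * if H θ = Hbar then Λ θ else 0 := by
      apply intervalIntegral.integral_congr
      intro θ _
      by_cases hc : H θ = Hbar
      · simp only [if_pos hc]; ring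
      · simp only [if_neg hc]; ring
    rw [this, intervalIntegral.integral_const_mul]
    ring
  rw [hT] at hDCT
  intro δ hδ
  have hev : ∀ᶠ h in nhdsWithin (0 : ℝ) (Set.Ioi 0),
      |(∫ θ in (0 : ℝ)..π,
          Λ θ * (32 - 8 * 2 ^ (2 * H θ)) * h ^ (2 * H θ - 2 * Hbar))
        - (4 - 2 ^ (2 * Hbar))
            * (8 * ∫ θ in (0 : ℝ)..π, if H θ = Hbar then Λ θ else 0)| < δ := by
    have := Metric.tendsto_nhds.mp hDCT δ hδ
    simpa [Real.dist_eq] using this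
  rcases mem_nhdsGT_iff_exists_Ioo_subset.mp hev with ⟨u, hu, hsub⟩
  refine ⟨u, hu, fun h hh hhu t ht _ => ?_⟩
  have h1 := hsub ⟨hh, hhu⟩
  rw [main h hh t ht]
  exact h1
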